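/- arXiv:1704.08464 — 6 statements merged into one kernel-verified Lean document; each statement's English description precedes it below -/
import Mathlib

section
/- (Theorem 1, case p ≥ 2, unit weights.) With the 0/1 adjacency matrix A built from a fixed ranking r_x ∈ R, let L be the strictly lower-triangular part of A and z = (1,…,1)^T ∈ ℝ^n. Then for every integer p ≥ 2, the number of common subsequences of length p satisfies κ_p(R) = z^T L^{p−1} z. -/
/-
Rankings have no repetitions, so a common subsequence of `R` is a sublist of `rx`, i.e. `rx` read
along a list of positions, and it is common to all of `R` exactly when each consecutive pair of its
entries occurs, in this order, in every ranking (the relation is transitive, and a list whose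
entries are pairwise in the order of `r` is a sublist of `r`). For `p ≥ 2` the pair condition also
forces each entry to occur in every ranking. Hence `κ_p(R)` counts the walks through `p` vertices
in the digraph on the positions of `rx` with adjacency matrix `Lᵀ`, that is
`zᵀ (Lᵀ)^(p-1) z = zᵀ L^(p-1) z`.
-/

open List Matrix

def commonSubseq {α : Type*} (R : Set (List α)) : Set (List α) :=
  {y | y ≠ [] ∧ ∀ r ∈ R, y.Sublist r}

noncomputable def kappa {α : Type*} (R : Set (List α)) : ℕ :=
  (commonSubseq R).ncard

noncomputable def kappaP {α : Type*} (p : ℕ) (R : Set (List α)) : ℕ :=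
  {y ∈ commonSubseq R | y.length = p}.ncard

theorem List.isChain_ofFn_iff_castSucc {α : Type*} {k : ℕ} {f : Fin (k + 1) → α}
    {r : α → α → Prop} : (ofFn f).IsChain r ↔ ∀ t : Fin k, r (f t.castSucc) (f t.succ) := by
  rw [isChain_ofFn, Fin.forall_iff]
  simp

section Walks

variable {ι R : Type*} [Fintype ι] [DecidableEq ι] [CommSemiring R]

theorem Matrix.pow_mulVec_one_apply (M : Matrix ι ι R) (k : ℕ) (i : ι) :
    (M ^ k *ᵥ 1) i =
      ∑ g : Fin k → ι, ∏ t : Fin k, M ((Fin.cons i g : Fin (k + 1) → ι) t.castSucc) (g t) := by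
  induction k generalizing i with
  | zero => simp
  | succ k ih =>
    rw [pow_succ', ← mulVec_mulVec, mulVec, dotProduct,
      ← (Fin.consEquiv fun _ => ι).sum_comp, Fintype.sum_prod_type]
    simp [ih, Fin.prod_univ_succ, Finset.mul_sum]

theorem Matrix.one_dotProduct_pow_mulVec_one (M : Matrix ι ι R) (k : ℕ) :
    1 ⬝ᵥ (M ^ k *ᵥ 1) = ∑ f : Fin (k + 1) → ι, ∏ t : Fin k, M (f t.castSucc) (f t.succ) := by
  rw [← (Fin.consEquiv fun _ => ι).sum_comp, Fintype.sum_prod_type]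
  simp [dotProduct, pow_mulVec_one_apply]

theorem Matrix.one_dotProduct_pow_mulVec_one_eq_ncard (r : ι → ι → Prop) [DecidableRel r]
    (k : ℕ) :
    1 ⬝ᵥ ((of fun a b => if r a b then (1 : R) else 0) ^ k *ᵥ 1) =
      {f : Fin (k + 1) → ι | (ofFn f).IsChain r}.ncard := by
  rw [one_dotProduct_pow_mulVec_one]
  simp only [of_apply, Finset.prod_boole, Finset.mem_univ, true_imp_iff,
    ← isChain_ofFn_iff_castSucc]
  rw [Finset.sum_boole, ← Set.ncard_coe_finset, Finset.coe_filter]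
  simp

end Walks

section Rankings

variable {α : Type*} [DecidableEq α]

theorem List.Nodup.pairwise_idxOf_lt {r : List α} (hr : r.Nodup) :
    r.Pairwise fun a b => r.idxOf a < r.idxOf b := by
  rw [pairwise_iff_getElem]
  intro i j hi hj hij
  rwa [hr.idxOf_getElem, hr.idxOf_getElem]

theorem List.sublist_of_forall_mem_of_pairwise_idxOf_lt {y r : List α} (hmem : ∀ x ∈ y, x ∈ r)
    (hy : y.Pairwise fun a b => r.idxOf a < r.idxOf b) : y <+ r := by
  have hlt : ∀ t : Fin y.length, r.idxOf (y.get t) < r.length :=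
    fun t => idxOf_lt_length_iff.2 (hmem _ (y.get_mem t))
  rw [sublist_iff_exists_fin_orderEmbedding_get_eq]
  exact ⟨OrderEmbedding.ofStrictMono (fun t => ⟨r.idxOf (y.get t), hlt t⟩)
    fun s t hst => pairwise_iff_get.1 hy s t hst, fun t => (idxOf_get (hlt t)).symm⟩

theorem List.Nodup.sublist_iff_pairwise_idxOf_lt {y r : List α} (hr : r.Nodup) :
    y <+ r ↔ (∀ x ∈ y, x ∈ r) ∧ y.Pairwise fun a b => r.idxOf a < r.idxOf b :=
  ⟨fun h => ⟨fun _ hx => h.subset hx, hr.pairwise_idxOf_lt.sublist h⟩,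
    fun h => sublist_of_forall_mem_of_pairwise_idxOf_lt h.1 h.2⟩

theorem List.exists_map_get_ofFn_eq {l y : List α} (h : ∀ x ∈ y, x ∈ l) :
    ∃ f : Fin y.length → Fin l.length, (ofFn f).map l.get = y :=
  ⟨fun t => ⟨l.idxOf y[t], idxOf_lt_length_iff.2 (h _ (getElem_mem _))⟩,
    ext_getElem (by simp) fun i _ _ => by simp [getElem_idxOf]⟩

def CommonlyPrecedes (R : Set (List α)) (x y : α) : Prop :=
  ∀ r ∈ R, x ∈ r ∧ y ∈ r ∧ r.idxOf x < r.idxOf y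

instance (R : Set (List α)) : IsTrans α (CommonlyPrecedes R) :=
  ⟨fun _ _ _ hxy hyz r hr =>
    ⟨(hxy r hr).1, (hyz r hr).2.1, (hxy r hr).2.2.trans (hyz r hr).2.2⟩⟩

theorem CommonlyPrecedes.get_lt {R : Set (List α)} {rx : List α} (hrx : rx ∈ R)
    (hnd : rx.Nodup) {a b : Fin rx.length} (h : CommonlyPrecedes R (rx.get a) (rx.get b)) :
    a < b := by
  simpa [hnd.idxOf_getElem] using (h rx hrx).2.2

theorem forall_sublist_iff_isChain_commonlyPrecedes {R : Set (List α)}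
    (hR : ∀ r ∈ R, r.Nodup) {y : List α} (hy : 2 ≤ y.length) :
    (∀ r ∈ R, y <+ r) ↔ y.IsChain (CommonlyPrecedes R) := by
  rw [isChain_iff_pairwise]
  constructor
  · intro hsub
    refine pairwise_iff_forall_sublist.2 fun hab r hr => ?_
    simpa [(hR r hr).sublist_iff_pairwise_idxOf_lt, and_assoc] using hab.trans (hsub r hr)
  · intro hpw r hr
    refine (hR r hr).sublist_iff_pairwise_idxOf_lt.2 ⟨?_, hpw.imp fun h => (h r hr).2.2⟩
    obtain ⟨a, b, t, rfl⟩ : ∃ a b t, y = a :: b :: t := match y, hy with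
      | a :: b :: t, _ => ⟨a, b, t, rfl⟩
    simp only [List.pairwise_cons, List.mem_cons] at hpw
    simp only [List.forall_mem_cons]
    exact ⟨(hpw.1 b (.inl rfl) r hr).1, (hpw.1 b (.inl rfl) r hr).2.1,
      fun x hx => (hpw.1 x (.inr hx) r hr).2.1⟩

theorem kappaP_eq_ncard_isChain {R : Set (List α)} (hR : ∀ r ∈ R, r.Nodup) {rx : List α}
    (hrx : rx ∈ R) {m : ℕ} (hm : 2 ≤ m) :
    kappaP m R = {f : Fin m → Fin rx.length |
      (ofFn f).IsChain fun a b => CommonlyPrecedes R (rx.get a) (rx.get b)}.ncard := by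
  have hinj : Function.Injective fun f : Fin m → Fin rx.length => (ofFn f).map rx.get :=
    (map_injective_iff.2 (nodup_iff_injective_get.1 (hR rx hrx))).comp ofFn_injective
  rw [kappaP, ← Set.ncard_image_of_injective _ hinj]
  congr 1
  ext y
  simp only [commonSubseq, Set.mem_ofPred_eq, Set.mem_image, ← isChain_map]
  constructor
  · rintro ⟨⟨-, hsub⟩, rfl⟩
    obtain ⟨f, hf⟩ := exists_map_get_ofFn_eq fun _ hx => (hsub rx hrx).subset hx
    exact ⟨f, hf.symm ▸ (forall_sublist_iff_isChain_commonlyPrecedes hR hm).1 hsub, hf⟩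
  · rintro ⟨f, hf, rfl⟩
    have hlen : ((ofFn f).map rx.get).length = m := by simp
    exact ⟨⟨ne_nil_of_length_pos (by omega),
      (forall_sublist_iff_isChain_commonlyPrecedes hR (hlen.symm ▸ hm)).2 hf⟩, hlen⟩

end Rankings

theorem kappaP_eq_quadratic_form_general {α : Type*} [DecidableEq α]
    (R : Finset (List α)) (hnd : ∀ r ∈ R, r.Nodup)
    (rx : List α) (hrx : rx ∈ R)
    (L : Matrix (Fin rx.length) (Fin rx.length) ℝ)
    (hlow : ∀ i j : Fin rx.length, j < i →
      L i j = if (∀ r ∈ R, rx.get i ∈ r) ∧ (∀ r ∈ R, rx.get j ∈ r) ∧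
          (∀ r ∈ R, r.idxOf (rx.get j) < r.idxOf (rx.get i))
        then 1 else 0)
    (hrest : ∀ i j : Fin rx.length, ¬ j < i → L i j = 0)
    (p : ℕ) (hp : 2 ≤ p) :
    (kappaP p (R : Set (List α)) : ℝ) =
      dotProduct (fun _ => 1) ((L ^ (p - 1)).mulVec fun _ => 1) := by
  classical
  obtain ⟨k, rfl⟩ : ∃ k, p = k + 1 := ⟨p - 1, by omega⟩
  have hL : L = (of fun a b =>
      if CommonlyPrecedes (R : Set (List α)) (rx.get a) (rx.get b) then (1 : ℝ) else 0)ᵀ := by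
    ext i j
    rw [transpose_apply, of_apply]
    by_cases hji : j < i
    · rw [hlow i j hji]
      exact if_congr (by simp only [CommonlyPrecedes, Finset.mem_coe, forall_and, and_left_comm])
        rfl rfl
    · rw [hrest i j hji, if_neg fun h => hji (h.get_lt hrx (hnd rx hrx))]
  rw [Nat.add_sub_cancel, hL, ← transpose_pow, dotProduct_transpose_mulVec,
    kappaP_eq_ncard_isChain hnd hrx hp]
  exact (one_dotProduct_pow_mulVec_one_eq_ncard _ k).symm

/-- Theorem 1, case `p ≥ 2`, unit weights: with `L` the strictly
lower-triangular part of the 0/1 adjacency matrix built from a fixed ranking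
`rx ∈ R`, and `z` the all-ones vector, `κ_p(R) = zᵀ L^(p-1) z`. -/
theorem kappaP_eq_quadratic_form {α : Type*} [DecidableEq α]
    (R : Finset (List α)) (hR : R.Nonempty) (hnd : ∀ r ∈ R, r.Nodup)
    (rx : List α) (hrx : rx ∈ R)
    (L : Matrix (Fin rx.length) (Fin rx.length) ℝ)
    (hlow : ∀ i j : Fin rx.length, j < i →
      L i j = if (∀ r ∈ R, rx.get i ∈ r) ∧ (∀ r ∈ R, rx.get j ∈ r) ∧
          (∀ r ∈ R, r.idxOf (rx.get j) < r.idxOf (rx.get i))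
        then 1 else 0)
    (hrest : ∀ i j : Fin rx.length, ¬ j < i → L i j = 0)
    (p : ℕ) (hp : 2 ≤ p) :
    (kappaP p (R : Set (List α)) : ℝ) =
      dotProduct (fun _ => 1) ((L ^ (p - 1)).mulVec fun _ => 1) :=
  kappaP_eq_quadratic_form_general R hnd rx hrx L hlow hrest p hp
end

section
/- (Theorem 1, weighted off-diagonal.) Let ψ : Σ × Σ → ℝ be any weight function on ordered pairs. Define the n×n real matrix L by: for i > j, L_{ij} = ψ(r_{x_j}, r_{x_i}) if both items r_{x_i} and r_{x_j} occur in every ranking of R and r_{x_j} occurs before r_{x_i} in every ranking of R, and L_{ij} = 0 in all other cases (in particular L_{ij} = 0 for i ≤ j). Let z = (1,…,1)^T ∈ ℝ^n. Then for every integer p ≥ 2, z^T L^{p−1} z = Σ_{y ∈ S_p(R)} Π_{i=1}^{p−1} ψ(y_i, y_{i+1}), where the sum ranges over all common subsequences y = (y_1, …, y_p) of R of length p. -/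
open List Matrix

/-!
Expanding the matrix power, `zᵀ L^(p-1) z` is a sum over index paths `i₁, …, i_p` of products
of entries of `Lᵀ`. The entry `Lᵀ i j` is `ψ (rx i) (rx j)` when `rx i` precedes `rx j` in every
ranking and `0` otherwise (precedence in `rx` itself forces `i < j`), so a path contributes exactly
when its image in `rx` is a chain for the precedence relation, and then with its `ψ`-weight. A list
of length at least 2 is such a chain iff it is a common subsequence. Since `rx` has no duplicates,
paths are in bijection with the lists of length `p` drawn from `rx`, and these include every common
subsequence.
-/

namespace List

variable {β M : Type*}

def pathWeight [Monoid M] (f : β → β → M) (l : List β) : M :=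
  ((l.zip l.tail).map fun q => f q.1 q.2).prod

section Monoid
variable [Monoid M] (f : β → β → M)

@[simp] lemma pathWeight_nil : pathWeight f [] = 1 := rfl

@[simp] lemma pathWeight_singleton (a : β) : pathWeight f [a] = 1 := rfl

@[simp] lemma pathWeight_cons_cons (a b : β) (l : List β) :
    pathWeight f (a :: b :: l) = f a b * pathWeight f (b :: l) := by
  simp [pathWeight]

lemma pathWeight_map {γ : Type*} (m : γ → β) :
    ∀ l : List γ, pathWeight f (l.map m) = pathWeight (fun a b => f (m a) (m b)) l
  | [] | [_] => rfl
  | a :: b :: l => by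
    rw [map_cons, map_cons, pathWeight_cons_cons, ← map_cons, pathWeight_map m (b :: l),
      pathWeight_cons_cons]

end Monoid

lemma pathWeight_ite [MonoidWithZero M] (f : β → β → M) (S : β → β → Prop) [DecidableRel S] :
    ∀ l : List β, pathWeight (fun a b => if S a b then f a b else 0) l =
      if l.IsChain S then pathWeight f l else 0
  | [] | [_] => by simp
  | a :: b :: l => by
    simp only [pathWeight_cons_cons, pathWeight_ite f S (b :: l), isChain_cons_cons]
    split_ifs <;> simp_all

lemma Sublist.exists_map_get_ofFn {α : Type*} {y r : List α} (h : y <+ r) {m : ℕ}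
    (hm : y.length = m) : ∃ g : Fin m → Fin r.length, (ofFn g).map r.get = y := by
  subst hm
  obtain ⟨f, hf⟩ := sublist_iff_exists_fin_orderEmbedding_get_eq.1 h
  refine ⟨f, ?_⟩
  rw [map_ofFn]
  exact (congrArg ofFn (funext fun i => (hf i).symm)).trans (ofFn_get y)

end List

lemma Fintype.sum_pi_fin_succ {n R : Type*} [Fintype n] [AddCommMonoid R] (k : ℕ)
    (F : (Fin (k + 1) → n) → R) : ∑ g, F g = ∑ i, ∑ g : Fin k → n, F (Fin.cons i g) := by
  rw [← (Fin.consEquiv fun _ => n).sum_comp, Fintype.sum_prod_type]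
  rfl

namespace Matrix

variable {n R : Type*} [Fintype n] [DecidableEq n] [Semiring R]

lemma pow_mulVec_one_apply_s7 (M : Matrix n n R) :
    ∀ (k : ℕ) (i : n),
      (M ^ k *ᵥ 1) i = ∑ g : Fin k → n, pathWeight (fun i j => M i j) (i :: ofFn g)
  | 0, i => by simp
  | k + 1, i => by
    rw [pow_succ', ← mulVec_mulVec, Fintype.sum_pi_fin_succ]
    change ∑ j, M i j * (M ^ k *ᵥ 1) j = _
    simp only [pow_mulVec_one_apply_s7 M k, Finset.mul_sum, ofFn_cons, pathWeight_cons_cons]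

lemma one_dotProduct_pow_mulVec_one_s7 (M : Matrix n n R) (k : ℕ) :
    1 ⬝ᵥ (M ^ k *ᵥ 1) = ∑ g : Fin (k + 1) → n, pathWeight (fun i j => M i j) (ofFn g) := by
  simp only [dotProduct, Pi.one_apply, one_mul, pow_mulVec_one_apply_s7, Fintype.sum_pi_fin_succ,
    ofFn_cons]

end Matrix

section Rankings

variable {α M : Type*} [DecidableEq α]

def Before (r : List α) (a b : α) : Prop :=
  a ∈ r ∧ b ∈ r ∧ r.idxOf a < r.idxOf b

def Precedes (R : Set (List α)) (a b : α) : Prop :=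
  ∀ r ∈ R, Before r a b

instance (r : List α) : Trans (Before r) (Before r) (Before r) :=
  ⟨fun hab hbc => ⟨hab.1, hbc.2.1, hab.2.2.trans hbc.2.2⟩⟩

lemma List.Nodup.isChain_before {r : List α} (hr : r.Nodup) : r.IsChain (Before r) := by
  refine isChain_iff_getElem.2 fun i hi => ⟨getElem_mem _, getElem_mem _, ?_⟩
  rw [hr.idxOf_getElem, hr.idxOf_getElem]
  exact i.lt_succ_self

lemma List.IsChain.mem_of_before {r y : List α} (h : y.IsChain (Before r))
    (hy : 2 ≤ y.length) {a : α} (ha : a ∈ y) : a ∈ r := by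
  obtain ⟨i, hi, rfl⟩ := getElem_of_mem ha
  rw [isChain_iff_getElem] at h
  by_cases hi' : i + 1 < y.length
  · exact (h i hi').1
  · obtain ⟨j, rfl⟩ : ∃ j, i = j + 1 := ⟨i - 1, by omega⟩
    exact (h j hi).2.1

lemma List.sublist_of_isChain_before {r y : List α} (h : y.IsChain (Before r))
    (hy : 2 ≤ y.length) : y <+ r := by
  have hpw := pairwise_iff_getElem.1 (isChain_iff_pairwise.1 h)
  have hlt (i : Fin y.length) : r.idxOf y[i] < r.length :=
    idxOf_lt_length_of_mem (h.mem_of_before hy (getElem_mem _))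
  refine sublist_iff_exists_fin_orderEmbedding_get_eq.2
    ⟨OrderEmbedding.ofStrictMono (fun i => ⟨r.idxOf y[i], hlt i⟩)
      fun i j hij => (hpw i j i.2 j.2 hij).2.2, fun i => ?_⟩
  simp

lemma isChain_precedes_iff {R : Set (List α)} {y : List α} :
    y.IsChain (Precedes R) ↔ ∀ r ∈ R, y.IsChain (Before r) := by
  simp only [isChain_iff_getElem, Precedes]
  exact ⟨fun h r hr i hi => h i hi r hr, fun h i hi r hr => h r hr i hi⟩

lemma isChain_precedes_iff_mem_commonSubseq {R : Set (List α)} (hR : ∀ r ∈ R, r.Nodup)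
    {y : List α} (hy : 2 ≤ y.length) : y.IsChain (Precedes R) ↔ y ∈ commonSubseq R := by
  rw [isChain_precedes_iff]
  refine ⟨fun h => ⟨ne_nil_of_length_pos (by omega), fun r hr => ?_⟩,
    fun h r hr => (hR r hr).isChain_before.sublist (h.2 r hr)⟩
  exact sublist_of_isChain_before (h r hr) hy

lemma lt_of_precedes_get {R : Set (List α)} {r : List α} (hr : r ∈ R) (hnd : r.Nodup)
    {i j : Fin r.length} (h : Precedes R (r.get i) (r.get j)) : i < j := by
  have := (h r hr).2.2
  rwa [get_idxOf hnd, get_idxOf hnd] at this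

lemma pathWeight_ite_precedes [MonoidWithZero M] {R : Set (List α)} [DecidableRel (Precedes R)]
    (hR : ∀ r ∈ R, r.Nodup) (ψ : α → α → M) {m : ℕ} (hm : 2 ≤ m) {y : List α}
    (hy : y.length = m) :
    pathWeight (fun a b => if Precedes R a b then ψ a b else 0) y =
      {y | y ∈ commonSubseq R ∧ y.length = m}.indicator (pathWeight ψ) y := by
  classical
  rw [pathWeight_ite, Set.indicator_apply]
  exact if_congr ((isChain_precedes_iff_mem_commonSubseq hR (hy ▸ hm)).trans
    ⟨fun h => ⟨h, hy⟩, And.left⟩) rfl rfl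

lemma transpose_apply_eq_ite [Zero M] {R : Finset (List α)}
    [DecidableRel (Precedes (R : Set (List α)))] {rx : List α} (hrx : rx ∈ R) (hnd : rx.Nodup)
    {ψ : α → α → M} {L : Matrix (Fin rx.length) (Fin rx.length) M}
    (hlow : ∀ i j : Fin rx.length, j < i →
      L i j = if (∀ r ∈ R, rx.get i ∈ r) ∧ (∀ r ∈ R, rx.get j ∈ r) ∧
          (∀ r ∈ R, r.idxOf (rx.get j) < r.idxOf (rx.get i))
        then ψ (rx.get j) (rx.get i) else 0)
    (hrest : ∀ i j : Fin rx.length, ¬ j < i → L i j = 0) (i j : Fin rx.length) :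
    Lᵀ i j = if Precedes (R : Set (List α)) (rx.get i) (rx.get j)
      then ψ (rx.get i) (rx.get j) else 0 := by
  rw [transpose_apply]
  by_cases hij : i < j
  · rw [hlow j i hij]
    exact if_congr (by simp only [Precedes, Before, Finset.mem_coe]; grind) rfl rfl
  · rw [hrest j i hij]
    exact (if_neg fun h => hij (lt_of_precedes_get hrx hnd h)).symm

end Rankings

theorem quadratic_form_weighted_general {α : Type*} [DecidableEq α]
    (R : Finset (List α)) (hnd : ∀ r ∈ R, r.Nodup)
    (rx : List α) (hrx : rx ∈ R) (ψ : α → α → ℝ)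
    (L : Matrix (Fin rx.length) (Fin rx.length) ℝ)
    (hlow : ∀ i j : Fin rx.length, j < i →
      L i j = if (∀ r ∈ R, rx.get i ∈ r) ∧ (∀ r ∈ R, rx.get j ∈ r) ∧
          (∀ r ∈ R, r.idxOf (rx.get j) < r.idxOf (rx.get i))
        then ψ (rx.get j) (rx.get i) else 0)
    (hrest : ∀ i j : Fin rx.length, ¬ j < i → L i j = 0)
    (p : ℕ) (hp : 2 ≤ p) :
    dotProduct (fun _ => (1 : ℝ)) ((L ^ (p - 1)).mulVec fun _ => 1) =
      ∑ᶠ y ∈ {y | y ∈ commonSubseq (R : Set (List α)) ∧ y.length = p},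
        (((y.zip y.tail).map fun q => ψ q.1 q.2).prod) := by
  classical
  obtain ⟨k, rfl⟩ : ∃ k, p = k + 2 := ⟨p - 2, by omega⟩
  set S := {y | y ∈ commonSubseq (R : Set (List α)) ∧ y.length = k + 2}
  set W : α → α → ℝ := fun a b => if Precedes (R : Set (List α)) a b then ψ a b else 0
  set e : (Fin (k + 2) → Fin rx.length) → List α := fun g => (ofFn g).map rx.get
  have he : Function.Injective e := fun g g' h =>
    ofFn_injective (map_injective_iff.2 (nodup_iff_injective_get.1 (hnd rx hrx)) h)
  have hSe : S ⊆ Set.range e := fun y hy => (hy.1.2 rx hrx).exists_map_get_ofFn hy.2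
  calc 1 ⬝ᵥ (L ^ (k + 2 - 1) *ᵥ 1)
      = 1 ⬝ᵥ (Lᵀ ^ (k + 1) *ᵥ 1) := by
        rw [← transpose_pow, mulVec_transpose, dotProduct_comm 1 (1 ᵥ* _), ← dotProduct_mulVec]
        rfl
    _ = ∑ g, pathWeight (fun i j => Lᵀ i j) (ofFn g) := one_dotProduct_pow_mulVec_one_s7 _ _
    _ = ∑ g, pathWeight W (e g) := by
        simp only [transpose_apply_eq_ite hrx (hnd rx hrx) hlow hrest, e, pathWeight_map, W]
    _ = ∑ g, S.indicator (pathWeight ψ) (e g) :=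
        Finset.sum_congr rfl fun g _ => pathWeight_ite_precedes hnd ψ hp (by simp [e])
    _ = ∑ᶠ y ∈ Set.range e, S.indicator (pathWeight ψ) y := by
        rw [finsum_mem_range he, finsum_eq_sum_of_fintype]
    _ = ∑ᶠ y ∈ S, pathWeight ψ y := by
        rw [finsum_mem_def, Set.indicator_indicator, Set.inter_eq_right.2 hSe, ← finsum_mem_def]

/-- Theorem 1, weighted off-diagonal: with edge weights
`ψ : Σ × Σ → ℝ`, `zᵀ L^(p-1) z` equals the sum over all common subsequences
`y = (y₁, …, y_p)` of `R` of length `p` of the product `∏ ψ(y_i, y_{i+1})`. -/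
theorem quadratic_form_weighted {α : Type*} [DecidableEq α]
    (R : Finset (List α)) (hR : R.Nonempty) (hnd : ∀ r ∈ R, r.Nodup)
    (rx : List α) (hrx : rx ∈ R) (ψ : α → α → ℝ)
    (L : Matrix (Fin rx.length) (Fin rx.length) ℝ)
    (hlow : ∀ i j : Fin rx.length, j < i →
      L i j = if (∀ r ∈ R, rx.get i ∈ r) ∧ (∀ r ∈ R, rx.get j ∈ r) ∧
          (∀ r ∈ R, r.idxOf (rx.get j) < r.idxOf (rx.get i))
        then ψ (rx.get j) (rx.get i) else 0)
    (hrest : ∀ i j : Fin rx.length, ¬ j < i → L i j = 0)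
    (p : ℕ) (hp : 2 ≤ p) :
    dotProduct (fun _ => (1 : ℝ)) ((L ^ (p - 1)).mulVec fun _ => 1) =
      ∑ᶠ y ∈ {y | y ∈ commonSubseq (R : Set (List α)) ∧ y.length = p},
        (((y.zip y.tail).map fun q => ψ q.1 q.2).prod) :=
  quadratic_form_weighted_general R hnd rx hrx ψ L hlow hrest p hp
end

section
/- (Key lemma in the proof of Theorem 1.) With the 0/1 matrix L built from a fixed ranking r_x ∈ R, for every integer p ≥ 2 and all indices i > j, the entry (L^{p−1})_{ij} equals the number of common subsequences of R of length p whose first item is r_{x_j} and whose last item is r_{x_i}. -/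
open List Matrix

/-! Every ranking is duplicate-free, so a list with at least two entries is a sublist of a
ranking iff each pair of consecutive entries is. Hence a common subsequence of length `p` from
`rx_j` to `rx_i` is the image under `rx.get` of a walk of length `p - 1` from `j` to `i` in the
digraph on positions of `rx` whose edges `k → l` are the common subsequences `[rx_k, rx_l]`.
The adjacency matrix of that digraph is `Lᵀ`, and entries of powers of an adjacency matrix
count walks. -/

namespace List

variable {α : Type*} [DecidableEq α] {r : List α}

theorem Nodup.sublist_iff_subset_and_pairwise_idxOf_lt (hr : r.Nodup) {y : List α} :
    y <+ r ↔ y ⊆ r ∧ y.Pairwise (fun a b => r.idxOf a < r.idxOf b) := by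
  have hpw : r.Pairwise (fun a b => r.idxOf a < r.idxOf b) :=
    pairwise_iff_getElem.2 fun i j hi hj hij => by
      rwa [hr.idxOf_getElem, hr.idxOf_getElem]
  refine ⟨fun h => ⟨h.subset, hpw.sublist h⟩, fun ⟨hsub, hy⟩ => ?_⟩
  have : Std.Antisymm (fun a b => r.idxOf a < r.idxOf b) := ⟨fun _ _ h h' => by omega⟩
  have hnd : y.Nodup := hy.imp fun h hab => by subst hab; exact lt_irrefl _ h
  exact sublist_of_subperm_of_pairwise (subperm_of_subset hnd hsub) hy hpw

theorem Nodup.pair_sublist_iff (hr : r.Nodup) {a b : α} :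
    [a, b] <+ r ↔ a ∈ r ∧ b ∈ r ∧ r.idxOf a < r.idxOf b := by
  simp [hr.sublist_iff_subset_and_pairwise_idxOf_lt, cons_subset, and_assoc]

theorem Nodup.pair_get_sublist_iff (hr : r.Nodup) {i j : Fin r.length} :
    [r.get i, r.get j] <+ r ↔ i < j := by
  simp [hr.pair_sublist_iff, hr.idxOf_getElem]

theorem Nodup.cons_cons_sublist_iff (hr : r.Nodup) {a b : α} {l : List α} :
    a :: b :: l <+ r ↔ [a, b] <+ r ∧ b :: l <+ r := by
  simp only [hr.sublist_iff_subset_and_pairwise_idxOf_lt, cons_subset, pairwise_cons,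
    forall_mem_cons]
  grind

end List

section CommonSubseq

variable {α : Type*} [DecidableEq α] {R : Set (List α)}

theorem pair_mem_commonSubseq_iff (hR : ∀ r ∈ R, r.Nodup) {a b : α} :
    [a, b] ∈ commonSubseq R ↔ ∀ r ∈ R, a ∈ r ∧ b ∈ r ∧ r.idxOf a < r.idxOf b := by
  simp only [commonSubseq, Set.mem_ofPred_eq, ne_eq, reduceCtorEq, not_false_eq_true, true_and]
  exact forall₂_congr fun r hr => (hR r hr).pair_sublist_iff

theorem cons_cons_mem_commonSubseq_iff (hR : ∀ r ∈ R, r.Nodup) {a b : α} {l : List α} :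
    a :: b :: l ∈ commonSubseq R ↔ [a, b] ∈ commonSubseq R ∧ b :: l ∈ commonSubseq R := by
  simp only [commonSubseq, Set.mem_ofPred_eq, ne_eq, reduceCtorEq, not_false_eq_true, true_and,
    ← forall₂_and]
  exact forall₂_congr fun r hr => (hR r hr).cons_cons_sublist_iff

theorem mem_commonSubseq_iff_isChain (hR : ∀ r ∈ R, r.Nodup) {y : List α}
    (hy : 2 ≤ y.length) : y ∈ commonSubseq R ↔ y.IsChain fun a b => [a, b] ∈ commonSubseq R := by
  obtain ⟨a, b, l, rfl⟩ : ∃ a b l, y = a :: b :: l := by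
    match y, hy with
    | a :: b :: l, _ => exact ⟨a, b, l, rfl⟩
  clear hy
  induction l generalizing a b with
  | nil => simp
  | cons c l ih => rw [cons_cons_mem_commonSubseq_iff hR, ih, isChain_cons_cons (a := a)]

end CommonSubseq

section Walks

variable {ι : Type*}

def relWalks (Q : ι → ι → Prop) (m : ℕ) (u v : ι) : Set (List ι) :=
  {w | w.length = m + 1 ∧ w.head? = some u ∧ w.getLast? = some v ∧ w.IsChain Q}

variable (Q : ι → ι → Prop)

theorem relWalks_zero (u v : ι) : relWalks Q 0 u v = {w | w = [u] ∧ u = v} := by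
  ext w
  simp only [relWalks, zero_add, length_eq_one_iff, Set.mem_ofPred_eq]
  constructor
  · rintro ⟨⟨x, rfl⟩, hu, hv, -⟩
    simp_all
  · rintro ⟨rfl, rfl⟩
    simp

theorem relWalks_succ [DecidableRel Q] (m : ℕ) (u v : ι) :
    relWalks Q (m + 1) u v = ⋃ k, if Q u k then cons u '' relWalks Q m k v else ∅ := by
  ext w
  simp only [Set.mem_iUnion]
  constructor
  · rintro ⟨hlen, hu, hv, hc⟩
    obtain ⟨k, w', rfl⟩ : ∃ k w', w = u :: k :: w' := by
      match w, hlen, hu with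
      | u' :: k :: w', _, hu => exact ⟨k, w', by simp_all⟩
    rw [isChain_cons_cons] at hc
    refine ⟨k, ?_⟩
    rw [if_pos hc.1]
    exact ⟨k :: w', ⟨by simpa using hlen, rfl, by simpa using hv, hc.2⟩, rfl⟩
  · rintro ⟨k, hk⟩
    split_ifs at hk with hQ
    · obtain ⟨w', ⟨hlen, hk, hv, hc⟩, rfl⟩ := hk
      obtain ⟨w'', rfl⟩ : ∃ w'', w' = k :: w'' := by
        match w', hk with
        | _ :: w'', hk => exact ⟨w'', by simp_all⟩
      exact ⟨by simpa using hlen, rfl, by simpa using hv, isChain_cons_cons.2 ⟨hQ, hc⟩⟩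
    · exact hk.elim

theorem relWalks_finite [Finite ι] (m : ℕ) (u v : ι) : (relWalks Q m u v).Finite :=
  (finite_length_eq ι (m + 1)).subset fun _ hw => hw.1

theorem pow_apply_eq_ncard_relWalks [Fintype ι] [DecidableEq ι] [DecidableRel Q]
    {S : Type*} [Semiring S] (A : Matrix ι ι S) (hA : ∀ u v, A u v = if Q u v then 1 else 0)
    (m : ℕ) (u v : ι) : (A ^ m) u v = (relWalks Q m u v).ncard := by
  induction m generalizing u with
  | zero =>
    rw [pow_zero, one_apply, relWalks_zero]
    split_ifs with h <;> simp [h]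
  | succ m ih =>
    have hdisj : Pairwise (Function.onFun _root_.Disjoint fun k =>
        (if Q u k then cons u '' relWalks Q m k v else ∅ : Set (List ι))) := by
      intro k k' hkk'
      simp only [Function.onFun]
      split_ifs
      · rw [Set.disjoint_left]
        rintro _ ⟨w, hw, rfl⟩ ⟨w', hw', heq⟩
        cases cons_injective heq
        exact hkk' (Option.some_injective _ (hw.2.1.symm.trans hw'.2.1))
      all_goals simp
    rw [pow_succ', mul_apply, relWalks_succ, Set.ncard_iUnion_of_finite
      (fun k => by split_ifs; exacts [(relWalks_finite Q m k v).image _, Set.finite_empty]) hdisj,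
      finsum_eq_sum_of_fintype, Nat.cast_sum]
    refine Finset.sum_congr rfl fun k _ => ?_
    rw [hA, ih]
    split_ifs
    · rw [one_mul, Set.ncard_image_of_injective _ cons_injective]
    · simp

end Walks

theorem image_map_get_relWalks {α : Type*} [DecidableEq α] {R : Set (List α)}
    (hR : ∀ r ∈ R, r.Nodup) {rx : List α} (hrx : rx ∈ R) {p : ℕ} (hp : 2 ≤ p)
    (i j : Fin rx.length) :
    map rx.get '' relWalks (fun k l => [rx.get k, rx.get l] ∈ commonSubseq R) (p - 1) j i =
      {y ∈ commonSubseq R | y.length = p ∧ y.head? = some (rx.get j) ∧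
        y.getLast? = some (rx.get i)} := by
  have hinj : Function.Injective rx.get := (hR rx hrx).injective_get
  ext y
  constructor
  · rintro ⟨w, ⟨hlen, hj, hi, hc⟩, rfl⟩
    have hlen' : (w.map rx.get).length = p := by rw [length_map, hlen]; omega
    refine ⟨?_, hlen', by simp [hj], by simp [hi]⟩
    rw [mem_commonSubseq_iff_isChain hR (by omega), isChain_map]
    exact hc
  · rintro ⟨hy, hlen, hj, hi⟩
    obtain ⟨w, -, rfl⟩ := sublist_map_iff.1 (map_get_finRange rx ▸ hy.2 rx hrx)
    rw [mem_commonSubseq_iff_isChain hR (by omega), isChain_map] at hy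
    refine ⟨w, ⟨?_, ?_, ?_, hy⟩, rfl⟩
    · rw [length_map] at hlen; omega
    · rw [head?_map] at hj
      exact Option.map_injective hinj hj
    · rw [getLast?_map] at hi
      exact Option.map_injective hinj hi

theorem matrix_power_counts_paths_general {α : Type*} [DecidableEq α]
    (R : Finset (List α)) (hnd : ∀ r ∈ R, r.Nodup)
    (rx : List α) (hrx : rx ∈ R)
    (L : Matrix (Fin rx.length) (Fin rx.length) ℝ)
    (hlow : ∀ i j : Fin rx.length, j < i →
      L i j = if (∀ r ∈ R, rx.get i ∈ r) ∧ (∀ r ∈ R, rx.get j ∈ r) ∧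
          (∀ r ∈ R, r.idxOf (rx.get j) < r.idxOf (rx.get i))
        then 1 else 0)
    (hrest : ∀ i j : Fin rx.length, ¬ j < i → L i j = 0)
    (p : ℕ) (hp : 2 ≤ p) (i j : Fin rx.length) :
    (L ^ (p - 1)) i j =
      ({y ∈ commonSubseq (R : Set (List α)) |
          y.length = p ∧ y.head? = some (rx.get j) ∧
            y.getLast? = some (rx.get i)}.ncard : ℝ) := by
  classical
  set Q : Fin rx.length → Fin rx.length → Prop :=
    fun k l => [rx.get k, rx.get l] ∈ commonSubseq (R : Set (List α))
  have hL : ∀ k l, Lᵀ k l = if Q k l then 1 else 0 := by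
    intro k l
    rw [transpose_apply]
    by_cases hkl : k < l
    · rw [hlow l k hkl]
      refine if_congr ?_ rfl rfl
      simp only [Q, pair_mem_commonSubseq_iff hnd, Finset.mem_coe, imp_and, forall_and]
      tauto
    · rw [hrest l k hkl, if_neg]
      exact fun hQ => hkl ((hnd rx hrx).pair_get_sublist_iff.1 (hQ.2 rx hrx))
  rw [← transpose_apply (L ^ (p - 1)), transpose_pow,
    pow_apply_eq_ncard_relWalks Q _ hL, ← image_map_get_relWalks hnd hrx hp,
    Set.ncard_image_of_injective _ (map_injective_iff.2 (hnd rx hrx).injective_get)]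

/-- key lemma of Theorem 1: for `p ≥ 2` and indices `i > j`, the
entry `(L^(p-1))_{ij}` equals the number of common subsequences of `R` of
length `p` whose first item is `rx_j` and whose last item is `rx_i`. -/
theorem matrix_power_counts_paths {α : Type*} [DecidableEq α]
    (R : Finset (List α)) (hR : R.Nonempty) (hnd : ∀ r ∈ R, r.Nodup)
    (rx : List α) (hrx : rx ∈ R)
    (L : Matrix (Fin rx.length) (Fin rx.length) ℝ)
    (hlow : ∀ i j : Fin rx.length, j < i →
      L i j = if (∀ r ∈ R, rx.get i ∈ r) ∧ (∀ r ∈ R, rx.get j ∈ r) ∧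
          (∀ r ∈ R, r.idxOf (rx.get j) < r.idxOf (rx.get i))
        then 1 else 0)
    (hrest : ∀ i j : Fin rx.length, ¬ j < i → L i j = 0)
    (p : ℕ) (hp : 2 ≤ p) (i j : Fin rx.length) (hij : j < i) :
    (L ^ (p - 1)) i j =
      ({y ∈ commonSubseq (R : Set (List α)) |
          y.length = p ∧ y.head? = some (rx.get j) ∧
            y.getLast? = some (rx.get i)}.ncard : ℝ) :=
  matrix_power_counts_paths_general R hnd rx hrx L hlow hrest p hp i j
end

section
/- (Corollary for computing κ(R).) With the 0/1 adjacency matrix A built from a fixed ranking r_x ∈ R of length n, let L be the strictly lower-triangular part of A, let I be the n×n identity matrix, and let z = (1,…,1)^T ∈ ℝ^n. Then I − L is invertible and the total number of nonempty common subsequences satisfies κ(R) = κ_1(R) + z^T (I − L)^{-1} z − n, where κ_1(R) = tr(A). -/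
/-!
Index the items of `rx` by their positions. Since rankings are duplicate-free, a list with at
least two elements is a common subsequence of `R` exactly when each consecutive pair occurs in
every ranking, the first before the second. Hence the common subsequences of length `p ≥ 2` are
the walks with `p` vertices in the digraph `PrecedesInAll` on positions, whose adjacency matrix
is `Lᵀ`. Its edges go forward in `rx`, so `L` is nilpotent and `(I - L)⁻¹ = ∑ Lᵏ`, while
`zᵀ Lᵏ z` counts walks with `k + 1` vertices: `κ_{k+1}(R)` for `k ≥ 1`, but all `n` positions
for `k = 0`, whence the correction `κ_1(R) - n`.
-/

open List Matrix

open Finset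

namespace List

variable {α : Type*}

theorem Nodup.pairwise_idxOf_lt_s10 [DecidableEq α] {r : List α} (hr : r.Nodup) :
    r.Pairwise (fun a b => r.idxOf a < r.idxOf b) :=
  pairwise_iff_getElem.2 fun i j hi hj hij => by simpa [hr] using hij

theorem Nodup.sublist_iff_subset_pairwise_idxOf_lt [DecidableEq α] {r y : List α}
    (hr : r.Nodup) : y <+ r ↔ y ⊆ r ∧ y.Pairwise (fun a b => r.idxOf a < r.idxOf b) := by
  refine ⟨fun h => ⟨h.subset, hr.pairwise_idxOf_lt_s10.sublist h⟩, fun ⟨hsub, hy⟩ => ?_⟩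
  have : Std.Antisymm (fun a b => r.idxOf a < r.idxOf b) := ⟨fun _ _ h h' => (h.asymm h').elim⟩
  have hynd : y.Nodup := hy.imp fun h => ne_of_apply_ne (r.idxOf ·) h.ne
  exact sublist_of_subperm_of_pairwise (subperm_of_subset hynd hsub) hy hr.pairwise_idxOf_lt_s10

theorem isChain_and_and_iff {P : α → Prop} {Q : α → α → Prop} {l : List α}
    (hl : 2 ≤ l.length) :
    l.IsChain (fun a b => P a ∧ P b ∧ Q a b) ↔ (∀ a ∈ l, P a) ∧ l.IsChain Q := by
  obtain ⟨a, b, t, rfl⟩ : ∃ a b t, l = a :: b :: t := by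
    match l, hl with
    | a :: b :: t, _ => exact ⟨a, b, t, rfl⟩
  induction t generalizing a b with
  | nil => simp [and_assoc]
  | cons c t ih =>
    rw [isChain_cons_cons, ih b c (by simp)]
    simp only [isChain_cons_cons, mem_cons, forall_eq_or_imp]
    tauto

theorem card_filter_isChain_ofFn_fin_one [Fintype α] (E : α → α → Prop) [DecidableRel E] :
    #{g : Fin 1 → α | (ofFn g).IsChain E} = Fintype.card α := by
  rw [filter_true_of_mem fun g _ => by simp [ofFn_succ], card_univ, Fintype.card_fun,
    Fintype.card_fin, pow_one]

end List

namespace Matrix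

variable {ι S : Type*} [Fintype ι]

theorem one_dotProduct_transpose_mulVec_one [CommSemiring S] (A : Matrix ι ι S) :
    1 ⬝ᵥ (Aᵀ *ᵥ 1) = 1 ⬝ᵥ (A *ᵥ 1) := by
  rw [← vecMul_transpose, transpose_transpose, dotProduct_comm, ← dotProduct_mulVec]

section DecidableEq

variable [DecidableEq ι]

theorem pow_mulVec_one_apply_eq_card_isChain [Semiring S] (E : ι → ι → Prop) [DecidableRel E]
    {M : Matrix ι ι S} (hM : ∀ i j, M i j = if E i j then 1 else 0) (k : ℕ) (i : ι) :
    (M ^ k *ᵥ 1) i = #{g : Fin k → ι | (i :: ofFn g).IsChain E} := by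
  induction k generalizing i with
  | zero => simp
  | succ k ih =>
    calc (M ^ (k + 1) *ᵥ 1) i = ∑ j, M i j * (M ^ k *ᵥ 1) j := by
          rw [pow_succ', ← mulVec_mulVec]; rfl
      _ = ∑ j, (#{g : Fin k → ι | E i j ∧ (j :: ofFn g).IsChain E} : S) := by
          refine Fintype.sum_congr _ _ fun j => ?_
          rw [hM, ih]
          by_cases h : E i j <;> simp [h]
      _ = #{g : Fin (k + 1) → ι | (i :: ofFn g).IsChain E} := by
          simp only [natCast_card_filter, ← Fintype.sum_prod_type']
          refine Fintype.sum_equiv (Fin.consEquiv fun _ => ι) _ _ fun p => ?_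
          simp [Fin.consEquiv, ofFn_succ]

theorem one_dotProduct_pow_mulVec_one_eq_card_isChain [Semiring S] (E : ι → ι → Prop)
    [DecidableRel E] {M : Matrix ι ι S} (hM : ∀ i j, M i j = if E i j then 1 else 0) (k : ℕ) :
    1 ⬝ᵥ (M ^ k *ᵥ 1) = #{g : Fin (k + 1) → ι | (ofFn g).IsChain E} := by
  simp only [dotProduct, Pi.one_apply, one_mul, pow_mulVec_one_apply_eq_card_isChain E hM,
    natCast_card_filter, ← Fintype.sum_prod_type']
  exact Fintype.sum_equiv (Fin.consEquiv fun _ => ι) _ _ fun p => by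
    simp [Fin.consEquiv, ofFn_succ]

end DecidableEq

theorem pow_eq_zero_of_strictLowerTriangular [Semiring S] {n : ℕ} {M : Matrix (Fin n) (Fin n) S}
    (hM : ∀ i j, i ≤ j → M i j = 0) {N : ℕ} (hN : n ≤ N) : M ^ N = 0 := by
  have hvanish : ∀ k (i j : Fin n), (i : ℕ) < j + k → (M ^ k) i j = 0 := by
    intro k
    induction k with
    | zero => intro i j h; exact one_apply_ne (by rintro rfl; omega)
    | succ k ih =>
      intro i j h
      rw [pow_succ, mul_apply]
      refine Finset.sum_eq_zero fun m _ => ?_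
      rcases le_or_gt m j with hmj | hjm
      · rw [hM m j hmj, mul_zero]
      · rw [ih i m (by omega), zero_mul]
  ext i j
  exact hvanish N i j (by omega)

theorem inv_one_sub_eq_sum_pow_of_strictLowerTriangular [CommRing S] {n : ℕ}
    {L : Matrix (Fin n) (Fin n) S} (hL : ∀ i j, i ≤ j → L i j = 0) {N : ℕ} (hN : n ≤ N) :
    (1 - L)⁻¹ = ∑ k ∈ range N, L ^ k :=
  inv_eq_right_inv (by rw [mul_neg_geom_sum, pow_eq_zero_of_strictLowerTriangular hL hN, sub_zero])

theorem one_dotProduct_inv_one_sub_mulVec_one_eq_sum_card_isChain [CommRing S] {n : ℕ}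
    (E : Fin n → Fin n → Prop) [DecidableRel E] (hE : ∀ i j, E i j → i < j)
    {L : Matrix (Fin n) (Fin n) S} (hL : ∀ i j, L i j = if E j i then 1 else 0) {N : ℕ}
    (hN : n ≤ N) :
    1 ⬝ᵥ ((1 - L)⁻¹ *ᵥ 1) =
      ∑ k ∈ range N, (#{g : Fin (k + 1) → Fin n | (ofFn g).IsChain E} : S) := by
  have hlow : ∀ i j, i ≤ j → L i j = 0 := fun i j hij => by
    rw [hL, if_neg fun h => (hE j i h).not_ge hij]
  rw [inv_one_sub_eq_sum_pow_of_strictLowerTriangular hlow hN, sum_mulVec, dotProduct_sum]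
  refine sum_congr rfl fun k _ => ?_
  rw [← transpose_transpose L, ← transpose_pow, one_dotProduct_transpose_mulVec_one,
    one_dotProduct_pow_mulVec_one_eq_card_isChain E fun i j => by rw [transpose_apply, hL]]

end Matrix

section Rankings

variable {α : Type*}

def PrecedesInAll [DecidableEq α] (R : Set (List α)) (a b : α) : Prop :=
  (∀ r ∈ R, a ∈ r) ∧ (∀ r ∈ R, b ∈ r) ∧ ∀ r ∈ R, r.idxOf a < r.idxOf b

theorem PrecedesInAll.lt [DecidableEq α] {R : Set (List α)} {rx : List α} (hrx : rx ∈ R)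
    (hnd : rx.Nodup) {i j : Fin rx.length} (h : PrecedesInAll R (rx.get i) (rx.get j)) :
    i < j := by
  have := h.2.2 rx hrx
  rwa [get_idxOf hnd, get_idxOf hnd] at this

theorem forall_sublist_iff_isChain_precedesInAll [DecidableEq α] {R : Set (List α)}
    (hnd : ∀ r ∈ R, r.Nodup) {y : List α} (hy : 2 ≤ y.length) :
    (∀ r ∈ R, y <+ r) ↔ y.IsChain (PrecedesInAll R) := by
  let Q a b := ∀ r ∈ R, r.idxOf a < r.idxOf b
  have : Trans Q Q Q := ⟨fun h h' r hr => (h r hr).trans (h' r hr)⟩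
  calc (∀ r ∈ R, y <+ r)
      ↔ ∀ r ∈ R, y ⊆ r ∧ y.Pairwise (fun a b => r.idxOf a < r.idxOf b) :=
        forall₂_congr fun r hr => (hnd r hr).sublist_iff_subset_pairwise_idxOf_lt
    _ ↔ (∀ a ∈ y, ∀ r ∈ R, a ∈ r) ∧ y.Pairwise Q := by
        simp only [pairwise_iff_forall_sublist, List.subset_def, Q]
        grind
    _ ↔ (∀ a ∈ y, ∀ r ∈ R, a ∈ r) ∧ y.IsChain Q := by rw [isChain_iff_pairwise]
    _ ↔ y.IsChain (PrecedesInAll R) := (isChain_and_and_iff hy).symm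

theorem kappaP_zero (R : Set (List α)) : kappaP 0 R = 0 := by
  have : {y ∈ commonSubseq R | y.length = 0} = ∅ :=
    Set.eq_empty_of_forall_notMem fun y ⟨⟨hne, _⟩, hlen⟩ => hne (length_eq_zero_iff.1 hlen)
  rw [kappaP, this, Set.ncard_empty]

theorem kappa_eq_sum_kappaP {R : Set (List α)} {rx : List α} (hrx : rx ∈ R) {N : ℕ}
    (hN : rx.length < N) : kappa R = ∑ p ∈ range N, kappaP p R := by
  classical
  set s : Finset (List α) := {y ∈ rx.sublists.toFinset | y ∈ commonSubseq R}
  have hs : commonSubseq R = s := by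
    ext y
    simp only [s, coe_filter, mem_toFinset, mem_sublists]
    exact ⟨fun hy => ⟨hy.2 rx hrx, hy⟩, And.right⟩
  rw [kappa, hs, Set.ncard_coe_finset, card_eq_sum_card_fiberwise (f := length) (t := range N)]
  · refine sum_congr rfl fun p _ => ?_
    rw [kappaP, hs, ← Set.ncard_coe_finset, coe_filter]
    rfl
  · intro y hy
    simp only [s, coe_filter, mem_toFinset, mem_sublists] at hy
    simpa using hy.1.length_le.trans_lt hN

open Classical in
theorem kappaP_eq_card_forall_sublist {R : Set (List α)} {rx : List α} (hrx : rx ∈ R)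
    (hnd : rx.Nodup) {p : ℕ} (hp : p ≠ 0) :
    kappaP p R = #{g : Fin p → Fin rx.length | ∀ r ∈ R, (ofFn g).map rx.get <+ r} := by
  have hinj : Function.Injective fun g : Fin p → Fin rx.length => (ofFn g).map rx.get :=
    (map_injective_iff.2 (nodup_iff_injective_get.1 hnd)).comp ofFn_injective
  have himage : {y ∈ commonSubseq R | y.length = p} =
      (fun g : Fin p → Fin rx.length => (ofFn g).map rx.get) ''
        ↑({g | ∀ r ∈ R, (ofFn g).map rx.get <+ r} : Finset (Fin p → Fin rx.length)) := by
    ext y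
    simp only [commonSubseq, coe_filter, mem_univ, true_and, Set.mem_image, Set.mem_ofPred_eq]
    constructor
    · rintro ⟨⟨-, hsub⟩, rfl⟩
      obtain ⟨f, hf⟩ := sublist_iff_exists_fin_orderEmbedding_get_eq.1 (hsub rx hrx)
      have hy : (ofFn f).map rx.get = y :=
        ext_get (by simp) fun t _ _ => by simpa using (hf ⟨t, ‹_›⟩).symm
      exact ⟨f, by rwa [hy], hy⟩
    · rintro ⟨g, hg, rfl⟩
      exact ⟨⟨by simpa using hp, hg⟩, by simp⟩
  rw [kappaP, himage, Set.ncard_image_of_injective _ hinj, Set.ncard_coe_finset]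

open Classical in
theorem kappaP_one_eq_card {R : Set (List α)} {rx : List α} (hrx : rx ∈ R) (hnd : rx.Nodup) :
    kappaP 1 R = #{i : Fin rx.length | ∀ r ∈ R, rx.get i ∈ r} := by
  rw [kappaP_eq_card_forall_sublist hrx hnd one_ne_zero]
  exact card_equiv (Equiv.funUnique (Fin 1) _) fun g => by simp

open Classical in
theorem kappaP_eq_card_isChain [DecidableEq α] {R : Set (List α)} {rx : List α} (hrx : rx ∈ R)
    (hnd : ∀ r ∈ R, r.Nodup) {p : ℕ} (hp : 2 ≤ p) :
    kappaP p R = #{g : Fin p → Fin rx.length |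
      (ofFn g).IsChain fun i j => PrecedesInAll R (rx.get i) (rx.get j)} := by
  rw [kappaP_eq_card_forall_sublist hrx (hnd rx hrx) (by omega)]
  refine congrArg card (filter_congr fun g _ => ?_)
  rw [forall_sublist_iff_isChain_precedesInAll hnd (by simpa using hp), isChain_map]

end Rankings

theorem kappa_via_inverse_general {α : Type*} [DecidableEq α]
    (R : Finset (List α)) (hnd : ∀ r ∈ R, r.Nodup)
    (rx : List α) (hrx : rx ∈ R)
    (A L : Matrix (Fin rx.length) (Fin rx.length) ℝ)
    (hdiag : ∀ i : Fin rx.length,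
      A i i = if ∀ r ∈ R, rx.get i ∈ r then 1 else 0)
    (hlowA : ∀ i j : Fin rx.length, j < i →
      A i j = if (∀ r ∈ R, rx.get i ∈ r) ∧ (∀ r ∈ R, rx.get j ∈ r) ∧
          (∀ r ∈ R, r.idxOf (rx.get j) < r.idxOf (rx.get i))
        then 1 else 0)
    (hL : ∀ i j : Fin rx.length, L i j = if j < i then A i j else 0) :
    IsUnit (1 - L) ∧
    (kappa (R : Set (List α)) : ℝ) =
      (kappaP 1 (R : Set (List α)) : ℝ) +
        dotProduct (fun _ => 1) ((1 - L)⁻¹.mulVec fun _ => 1) - rx.length ∧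
    (kappaP 1 (R : Set (List α)) : ℝ) = A.trace := by
  classical
  have hrx' : rx ∈ (R : Set (List α)) := hrx
  have hndx := hnd rx hrx
  let E (i j : Fin rx.length) : Prop := PrecedesInAll (R : Set (List α)) (rx.get i) (rx.get j)
  have hLE : ∀ i j, L i j = if E j i then 1 else 0 := by
    intro i j
    rw [hL]
    by_cases hji : j < i
    · rw [if_pos hji, hlowA i j hji]
      exact if_congr and_left_comm rfl rfl
    · rw [if_neg hji, if_neg fun h => hji (h.lt hrx' hndx)]
  have hlow : ∀ i j, i ≤ j → L i j = 0 := fun i j hij => by rw [hL, if_neg hij.not_gt]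
  refine ⟨IsNilpotent.isUnit_one_sub ⟨_, pow_eq_zero_of_strictLowerTriangular hlow le_rfl⟩,
    ?_, ?_⟩
  · have hκ : ∀ k, kappaP (k + 1 + 1) (R : Set (List α)) =
        #{g : Fin (k + 1 + 1) → Fin rx.length | (ofFn g).IsChain E} :=
      fun k => kappaP_eq_card_isChain hrx' hnd (by omega)
    rw [kappa_eq_sum_kappaP hrx' (by omega : rx.length < rx.length + 2),
      show (fun _ => 1 : Fin rx.length → ℝ) = 1 from rfl,
      one_dotProduct_inv_one_sub_mulVec_one_eq_sum_card_isChain E (fun i j h => h.lt hrx' hndx)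
        hLE (Nat.le_succ _),
      Finset.sum_range_succ', Finset.sum_range_succ', Finset.sum_range_succ', kappaP_zero,
      List.card_filter_isChain_ofFn_fin_one, Fintype.card_fin]
    simp only [hκ]
    push_cast
    ring
  · rw [kappaP_one_eq_card hrx' hndx, natCast_card_filter]
    exact sum_congr rfl fun i _ => by simp [hdiag]

/-- corollary for computing `κ(R)`: with `L` the strictly
lower-triangular part of the 0/1 adjacency matrix `A` built from a fixed
ranking `rx ∈ R` of length `n`, the matrix `I - L` is invertible and
`κ(R) = κ_1(R) + zᵀ (I - L)⁻¹ z - n`, where `κ_1(R) = tr A`. -/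
theorem kappa_via_inverse {α : Type*} [DecidableEq α]
    (R : Finset (List α)) (hR : R.Nonempty) (hnd : ∀ r ∈ R, r.Nodup)
    (rx : List α) (hrx : rx ∈ R)
    (A L : Matrix (Fin rx.length) (Fin rx.length) ℝ)
    (hdiag : ∀ i : Fin rx.length,
      A i i = if ∀ r ∈ R, rx.get i ∈ r then 1 else 0)
    (hlowA : ∀ i j : Fin rx.length, j < i →
      A i j = if (∀ r ∈ R, rx.get i ∈ r) ∧ (∀ r ∈ R, rx.get j ∈ r) ∧
          (∀ r ∈ R, r.idxOf (rx.get j) < r.idxOf (rx.get i))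
        then 1 else 0)
    (hupA : ∀ i j : Fin rx.length, i < j → A i j = 0)
    (hL : ∀ i j : Fin rx.length, L i j = if j < i then A i j else 0) :
    IsUnit (1 - L) ∧
    (kappa (R : Set (List α)) : ℝ) =
      (kappaP 1 (R : Set (List α)) : ℝ) +
        dotProduct (fun _ => 1) ((1 - L)⁻¹.mulVec fun _ => 1) - rx.length ∧
    (kappaP 1 (R : Set (List α)) : ℝ) = A.trace :=
  kappa_via_inverse_general R hnd rx hrx A L hdiag hlowA hL
end

section
/- (κ is a positive-semidefinite kernel for pairs of rankings.) For any rankings r_1, …, r_N over Σ (each a duplicate-free list), the N×N real matrix M defined by M_{ab} = |S({r_a, r_b})|, the number of nonempty lists that are subsequences of both r_a and r_b, is symmetric positive semidefinite: for every vector c ∈ ℝ^N, Σ_{a,b} c_a c_b M_{ab} ≥ 0. -/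
open List Matrix

/-- the pairwise consensus measure `κ({r_a, r_b})` is a
symmetric positive-semidefinite kernel on rankings. -/
theorem kappa_kernel_posSemidef {α : Type*} (N : ℕ) (r : Fin N → List α)
    (hnd : ∀ a, (r a).Nodup)
    (M : Matrix (Fin N) (Fin N) ℝ)
    (hM : ∀ a b, M a b = (kappa ({r a, r b} : Set (List α)) : ℝ)) :
    M.IsSymm ∧ ∀ c : Fin N → ℝ, 0 ≤ ∑ a, ∑ b, c a * c b * M a b := by
  classical
  constructor
  · ext a b
    rw [Matrix.transpose_apply, hM, hM, Set.pair_comm]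
  · intro c
    set Y : Finset (List α) := Finset.univ.biUnion (fun a => (r a).sublists.toFinset) with hY
    set f : Fin N → List α → ℝ :=
      fun a y => if y ≠ [] ∧ y.Sublist (r a) then (1 : ℝ) else 0 with hf
    have key : ∀ a b, M a b = ∑ y ∈ Y, f a y * f b y := by
      intro a b
      rw [hM]
      have h1 : commonSubseq ({r a, r b} : Set (List α)) =
          ↑(Y.filter (fun y => (y ≠ [] ∧ y.Sublist (r a)) ∧ (y ≠ [] ∧ y.Sublist (r b)))) := by
        ext y
        simp only [commonSubseq, Set.mem_setOf_eq, Finset.coe_filter, Finset.mem_biUnion,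
          Finset.mem_univ, true_and, List.mem_toFinset, List.mem_sublists, hY]
        constructor
        · rintro ⟨hne, hsub⟩
          have ha := hsub (r a) (Or.inl rfl)
          have hb := hsub (r b) (Or.inr rfl)
          exact ⟨⟨a, ha⟩, ⟨hne, ha⟩, hne, hb⟩
        · rintro ⟨_, ⟨hne, ha⟩, _, hb⟩
          refine ⟨hne, ?_⟩
          rintro s (rfl | rfl) <;> assumption
      rw [kappa, h1, Set.ncard_coe_finset, Finset.card_filter]
      push_cast
      refine Finset.sum_congr rfl fun y _ => ?_
      by_cases h1 : y ≠ [] ∧ y.Sublist (r a) <;>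
        by_cases h2 : y ≠ [] ∧ y.Sublist (r b) <;> simp [hf, h1, h2]
    have expand : ∑ y ∈ Y, (∑ a, c a * f a y) ^ 2
        = ∑ a, ∑ b, c a * c b * M a b := by
      simp_rw [key, sq, Finset.sum_mul_sum, Finset.mul_sum]
      rw [Finset.sum_comm]
      refine Finset.sum_congr rfl fun a _ => ?_
      rw [Finset.sum_comm]
      refine Finset.sum_congr rfl fun b _ => Finset.sum_congr rfl fun y _ => by ring
    rw [← expand]
    exact Finset.sum_nonneg fun y _ => sq_nonneg _
end

section
/- (Decomposition underlying the Kendall τ formula.) Let r_i and r_j be two full rankings over a finite set Σ with |Σ| = n, i.e., duplicate-free lists each containing every element of Σ, and let reverse(r_i) denote the list r_i in reverse order. Then |S_2(r_i, r_j)| + |S_2(reverse(r_i), r_j)| = n(n−1)/2, where S_2(r, s) is the set of length-2 lists that are subsequences of both r and s. -/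
open List Matrix

namespace List
variable {α : Type*}

theorem pair_sublist_or_swap {a b : α} {l : List α} (ha : a ∈ l) (hb : b ∈ l) (hab : a ≠ b) :
    [a, b] <+ l ∨ [b, a] <+ l := by
  induction l with
  | nil => simp at ha
  | cons c t ih =>
    simp only [mem_cons] at ha hb
    rcases ha with rfl | ha
    · exact .inl (cons_sublist_cons.2 (singleton_sublist.2 (hb.resolve_left hab.symm)))
    rcases hb with rfl | hb
    · exact .inr (cons_sublist_cons.2 (singleton_sublist.2 ha))
    exact (ih ha hb).imp (·.cons c) (·.cons c)

theorem Nodup.eq_of_pair_sublist_of_swap {a b : α} {l : List α} (hl : l.Nodup)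
    (hab : [a, b] <+ l) (hba : [b, a] <+ l) : a = b := by
  induction l with
  | nil => simp at hab
  | cons c t ih =>
    rw [nodup_cons] at hl
    cases hab with
    | cons _ hab =>
      cases hba with
      | cons _ hba => exact ih hl.2 hab hba
      | cons_cons _ hba => exact absurd (hab.subset (by simp)) hl.1
    | cons_cons _ hab =>
      cases hba with
      | cons _ hba => exact absurd (hba.subset (by simp)) hl.1
      | cons_cons => rfl

theorem Nodup.length_eq_card [Fintype α] {l : List α} (hl : l.Nodup) (hfull : ∀ a, a ∈ l) :
    l.length = Fintype.card α := by
  classical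
  rw [← toFinset_card_of_nodup hl, ← Finset.card_univ]
  congr
  exact Finset.eq_univ_of_forall (by simpa using hfull)

theorem pair_sublist_reverse_iff {a b : α} {l : List α} : [a, b] <+ l.reverse ↔ [b, a] <+ l := by
  simp [sublist_reverse_iff]

theorem ncard_setOf_length_sublist {s : List α} (hs : s.Nodup) (k : ℕ) :
    {y : List α | y.length = k ∧ y <+ s}.ncard = s.length.choose k := by
  classical
  have : {y : List α | y.length = k ∧ y <+ s} = ↑(s.sublistsLen k).toFinset := by
    ext y
    simp [mem_sublistsLen, and_comm]
  rw [this, Set.ncard_coe_finset, toFinset_card_of_nodup (nodup_sublistsLen k hs),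
    length_sublistsLen]

end List

section PairSublists

variable {α : Type*} {l s : List α}

theorem setOf_pair_sublist_union_reverse (hs : s.Nodup) (hsl : s ⊆ l) :
    {y | y.length = 2 ∧ y <+ l ∧ y <+ s} ∪ {y | y.length = 2 ∧ y <+ l.reverse ∧ y <+ s} =
      {y | y.length = 2 ∧ y <+ s} := by
  ext y
  simp only [Set.mem_union, Set.mem_ofPred_eq]
  refine ⟨by tauto, fun ⟨hy, hys⟩ => ?_⟩
  obtain ⟨a, b, rfl⟩ := length_eq_two.1 hy
  have hab : a ≠ b := by simpa using hys.nodup hs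
  rw [pair_sublist_reverse_iff]
  have := pair_sublist_or_swap (hsl (hys.subset (by simp))) (hsl (hys.subset (by simp))) hab
  tauto

theorem disjoint_setOf_pair_sublist_reverse (hl : l.Nodup) :
    Disjoint {y | y.length = 2 ∧ y <+ l ∧ y <+ s}
      {y | y.length = 2 ∧ y <+ l.reverse ∧ y <+ s} := by
  rw [Set.disjoint_left]
  rintro y ⟨hy, hyl, -⟩ ⟨-, hyl', -⟩
  obtain ⟨a, b, rfl⟩ := length_eq_two.1 hy
  have hab : a ≠ b := by simpa using hyl.nodup hl
  exact hab (hl.eq_of_pair_sublist_of_swap hyl (pair_sublist_reverse_iff.1 hyl'))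

theorem ncard_pair_sublist_add_ncard_pair_sublist_reverse (hl : l.Nodup) (hs : s.Nodup)
    (hsl : s ⊆ l) :
    {y | y.length = 2 ∧ y <+ l ∧ y <+ s}.ncard +
      {y | y.length = 2 ∧ y <+ l.reverse ∧ y <+ s}.ncard = s.length.choose 2 := by
  have hfin : {y : List α | y <+ s}.Finite := s.sublists.finite_toSet.subset (by simp)
  rw [← ncard_setOf_length_sublist hs, ← setOf_pair_sublist_union_reverse hs hsl,
    Set.ncard_union_eq (disjoint_setOf_pair_sublist_reverse hl)
      (hfin.subset fun y hy => hy.2.2) (hfin.subset fun y hy => hy.2.2)]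

end PairSublists

/-- decomposition underlying the Kendall τ formula: for two full
duplicate-free rankings `ri, rj` over a finite universe of `n` items,
`|S₂(ri, rj)| + |S₂(reverse ri, rj)| = n (n - 1) / 2`. -/
theorem kendall_decomposition {α : Type*} [Fintype α] (n : ℕ)
    (hn : Fintype.card α = n) (ri rj : List α)
    (hi : ri.Nodup) (hj : rj.Nodup)
    (hifull : ∀ σ : α, σ ∈ ri) (hjfull : ∀ σ : α, σ ∈ rj) :
    {y : List α | y.length = 2 ∧ y.Sublist ri ∧ y.Sublist rj}.ncard +
      {y : List α | y.length = 2 ∧ y.Sublist ri.reverse ∧ y.Sublist rj}.ncard =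
      n * (n - 1) / 2 := by
  rw [ncard_pair_sublist_add_ncard_pair_sublist_reverse hi hj fun σ _ => hifull σ,
    hj.length_eq_card hjfull, hn, Nat.choose_two_right]
end
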